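/- arXiv:2201.00109 — 2 statements merged into one kernel-verified Lean document; each statement's English description precedes it below -/
import Mathlib

section
/- For every real number z with 0 < |z| < π/2, ∑_{n=0}^∞ 4^n n (sin z)^{2n} / ((2n+1)·C_n) = (1/(4·cos^4 z))·(2 − cos(2z) + (1 − 2·cos(2z))·2z/sin(2z)). -/
open Real intervalIntegral MeasureTheory

open intervalIntegral Real

lemma beta_nat (k : ℕ) : ∀ m : ℕ,
    ∫ t in (0:ℝ)..1, t ^ m * (1 - t) ^ k
      = (m.factorial * k.factorial : ℝ) / ((m + k + 1).factorial) := by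
  induction k with
  | zero =>
    intro m
    simp only [pow_zero, mul_one, integral_pow, one_pow, Nat.factorial_zero, Nat.cast_one,
      Nat.add_zero, Nat.factorial_succ]
    push_cast
    rw [zero_pow (by omega), sub_zero]
    field_simp
  | succ k ih =>
    intro m
    have hm1 : ((m:ℝ) + 1) ≠ 0 := by positivity
    have hderiv : ∀ t ∈ Set.uIcc (0:ℝ) 1,
        HasDerivAt (fun t : ℝ => t ^ (m+1) * (1 - t) ^ (k+1) / (m+1))
          (t ^ m * (1 - t) ^ (k+1) - ((k:ℝ)+1)/((m:ℝ)+1) * (t ^ (m+1) * (1 - t) ^ k)) t := by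
      intro t _
      have h1 : HasDerivAt (fun t : ℝ => t ^ (m+1)) (((m:ℝ)+1) * t ^ m) t := by
        simpa using hasDerivAt_pow (m+1) t
      have h2 : HasDerivAt (fun t : ℝ => (1 - t) ^ (k+1))
          (-(((k:ℝ)+1) * (1 - t) ^ k)) t := by
        have := (((hasDerivAt_id t).const_sub 1).pow (k+1))
        refine this.congr_deriv ?_
        simp
      have := (h1.mul h2).div_const ((m:ℝ)+1)
      refine this.congr_deriv ?_
      field_simp
      ring
    have hInt : ∫ t in (0:ℝ)..1,
        (t ^ m * (1 - t) ^ (k+1) - ((k:ℝ)+1)/((m:ℝ)+1) * (t ^ (m+1) * (1 - t) ^ k))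
        = 0 := by
      rw [integral_eq_sub_of_hasDerivAt hderiv (by
        apply Continuous.intervalIntegrable; continuity)]
      norm_num
    have hcont1 : IntervalIntegrable (fun t : ℝ => t ^ m * (1 - t) ^ (k+1))
        MeasureTheory.volume 0 1 := by apply Continuous.intervalIntegrable; continuity
    have hcont2 : IntervalIntegrable (fun t : ℝ => ((k:ℝ)+1)/((m:ℝ)+1) * (t ^ (m+1) * (1 - t) ^ k))
        MeasureTheory.volume 0 1 := by apply Continuous.intervalIntegrable; continuity
    rw [integral_sub hcont1 hcont2, sub_eq_zero] at hInt
    rw [hInt, intervalIntegral.integral_const_mul, ih (m+1)]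
    rw [show m + (k+1) + 1 = (m+1) + k + 1 by omega]
    push_cast [Nat.factorial_succ]
    field_simp


open Real

lemma hasSum_n_np1_geo {w : ℝ} (hw : |w| < 1) :
    HasSum (fun n : ℕ => (n : ℝ) * ((n:ℝ) + 1) * w ^ n) (2 * w / (1 - w) ^ 3) := by
  have h := hasSum_choose_mul_geometric_of_norm_lt_one (𝕜 := ℝ) 2 (by simpa using hw)
  have h2 := h.mul_left (2 * w)
  have key : (fun n : ℕ => 2 * w * (((n + 2).choose 2 : ℝ) * w ^ n))
      = fun n : ℕ => ((n:ℝ)+1) * (((n:ℝ)+1) + 1) * w ^ (n+1) := by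
    funext n
    have hdvd : 2 ∣ (n+2)*(n+1) := by
      have := Nat.even_mul_succ_self (n+1)
      rw [mul_comm] at this
      exact this.two_dvd
    have hnn : (n + 2).choose 2 * 2 = (n+2)*(n+1) := by
      rw [Nat.choose_two_right]
      have : n + 2 - 1 = n + 1 := by omega
      rw [this]
      exact Nat.div_mul_cancel hdvd
    have : ((n + 2).choose 2 : ℝ) * 2 = ((n:ℝ)+2) * ((n:ℝ)+1) := by exact_mod_cast hnn
    have h3 : ((n + 2).choose 2 : ℝ) = ((n:ℝ)+2) * ((n:ℝ)+1) / 2 := by linarith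
    rw [h3]; ring
  rw [key] at h2
  have h2' : HasSum (fun n : ℕ => ((n+1 : ℕ) : ℝ) * (((n+1:ℕ):ℝ) + 1) * w ^ (n+1))
      (2 * w / (1 - w) ^ 3) := by
    rw [show (2:ℝ) * w / (1-w)^3 = 2 * w * (1/(1-w)^(2+1)) by ring]
    convert h2 using 2 with n
    · rfl
    push_cast; ring
  have := (hasSum_nat_add_iff (f := fun n : ℕ => (n : ℝ) * ((n:ℝ) + 1) * w ^ n) 1).mp h2'
  simpa using this

-- term identity: catalan / factorial
lemma cat_fact (n : ℕ) :
    ((2 * (n:ℝ) + 1) * (catalan n : ℝ)) * (((n:ℝ)+1) * ((n.factorial : ℝ) * (n.factorial : ℝ)))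
      = ((2*n+1).factorial : ℝ) := by
  have h1 : (n + 1) * catalan n = n.centralBinom := succ_mul_catalan_eq_centralBinom n
  have h2 : n.centralBinom * n.factorial * n.factorial = (2*n).factorial := by
    unfold Nat.centralBinom
    have := Nat.choose_mul_factorial_mul_factorial (Nat.le_mul_of_pos_left n (by norm_num) : n ≤ 2*n)
    simpa [Nat.two_mul, Nat.add_sub_cancel] using this
  have : (2*n+1) * ((n+1) * catalan n * (n.factorial * n.factorial)) = (2*n+1).factorial := by
    rw [h1, Nat.factorial_succ]
    rw [← h2]; ring
  calc ((2 * (n:ℝ) + 1) * (catalan n : ℝ)) * (((n:ℝ)+1) * ((n.factorial : ℝ) * (n.factorial : ℝ)))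
      = (((2*n+1) * ((n+1) * catalan n * (n.factorial * n.factorial)) : ℕ) : ℝ) := by push_cast; ring
    _ = _ := by rw [this]

lemma four_pow_beta_le (n : ℕ) : (4:ℝ)^n * n.factorial * n.factorial ≤ (2*n+1).factorial := by
  have h : 4^n ≤ (2*n+1) * n.centralBinom := by
    rcases Nat.eq_zero_or_pos n with rfl | hn
    · simp [Nat.centralBinom]
    · calc 4^n ≤ 2*n * n.centralBinom := Nat.four_pow_le_two_mul_self_mul_centralBinom n hn
        _ ≤ (2*n+1) * n.centralBinom := Nat.mul_le_mul_right _ (by omega)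
  have h2 : n.centralBinom * n.factorial * n.factorial = (2*n).factorial := by
    unfold Nat.centralBinom
    have := Nat.choose_mul_factorial_mul_factorial (Nat.le_mul_of_pos_left n (by norm_num) : n ≤ 2*n)
    simpa [Nat.two_mul, Nat.add_sub_cancel] using this
  have : 4^n * n.factorial * n.factorial ≤ (2*n+1).factorial := by
    calc 4^n * n.factorial * n.factorial
        ≤ (2*n+1) * n.centralBinom * n.factorial * n.factorial :=
          Nat.mul_le_mul_right _ (Nat.mul_le_mul_right _ h)
      _ = (2*n+1) * (2*n).factorial := by rw [mul_assoc, mul_assoc, ← mul_assoc n.centralBinom, h2]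
      _ = (2*n+1).factorial := (Nat.factorial_succ (2*n)).symm
  exact_mod_cast this


open Real intervalIntegral

lemma integral_closed_form {x c z : ℝ} (hc : 0 < c) (hxc : x^2 + c^2 = 1) (hx : x ≠ 0)
    (hz : Real.arctan (x / c) = z) :
    ∫ t in (0:ℝ)..1, (2 / (1 - 4*x^2*(t*(1-t)))^3 - 2 / (1 - 4*x^2*(t*(1-t)))^2)
      = (3 - 2*c^2) / (4*c^4) + (3 - 4*c^2) * z / (4*x*c^5) := by
  set Q : ℝ → ℝ := fun t => 1 - 4*x^2*(t*(1-t)) with hQdef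
  have hQeq : ∀ t, Q t = (x*(2*t-1))^2 + c^2 := by
    intro t; simp only [hQdef]; linear_combination -hxc
  have hQpos : ∀ t, 0 < Q t := by
    intro t; rw [hQeq]; positivity
  have hQcont : Continuous Q := by fun_prop
  set F : ℝ → ℝ := fun t =>
    (2*t-1)/(4*c^2*(Q t)^2) + 3*(2*t-1)/(8*c^4*(Q t)) - (2*t-1)/(2*c^2*(Q t))
      + (3/(8*c^5) - 1/(2*c^3)) * Real.arctan (x*(2*t-1)/c) / x with hFdef
  have hderiv : ∀ t ∈ Set.uIcc (0:ℝ) 1,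
      HasDerivAt F (2 / (Q t)^3 - 2 / (Q t)^2) t := by
    intro t _
    have hQt := hQpos t
    have hQ' : HasDerivAt Q (4*x^2*(2*t-1)) t := by
      have hmul := (hasDerivAt_id t).mul ((hasDerivAt_id t).const_sub 1)
      simp only [id_eq] at hmul
      have : HasDerivAt (fun t : ℝ => t*(1-t)) (1-2*t) t := by
        refine hmul.congr_deriv ?_; ring
      have := (this.const_mul (4*x^2)).const_sub 1
      refine this.congr_deriv ?_; ring
    have hnum : HasDerivAt (fun t : ℝ => 2*t-1) 2 t := by
      simpa using ((hasDerivAt_id t).const_mul 2).sub_const 1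
    have h1 : HasDerivAt (fun t => (2*t-1)/(4*c^2*(Q t)^2))
        ((2*(Q t) - 8*(x^2*(2*t-1)^2))/(4*c^2*(Q t)^3)) t := by
      have hd : HasDerivAt (fun t => 4*c^2*(Q t)^2) (4*c^2*(2*(Q t)*(4*x^2*(2*t-1)))) t := by
        have := (hQ'.pow 2).const_mul (4*c^2)
        refine this.congr_deriv ?_; ring
      have := hnum.div hd (by positivity)
      refine this.congr_deriv ?_
      field_simp
      ring
    have h2 : HasDerivAt (fun t => 3*(2*t-1)/(8*c^4*(Q t)))
        ((6*(Q t) - 12*(x^2*(2*t-1)^2))/(8*c^4*(Q t)^2)) t := by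
      have hd : HasDerivAt (fun t => 8*c^4*(Q t)) (8*c^4*(4*x^2*(2*t-1))) t := hQ'.const_mul _
      have hn : HasDerivAt (fun t : ℝ => 3*(2*t-1)) 6 t := by
        refine (hnum.const_mul 3).congr_deriv ?_; ring
      have := hn.div hd (by positivity)
      refine this.congr_deriv ?_
      field_simp
      ring
    have h3 : HasDerivAt (fun t => (2*t-1)/(2*c^2*(Q t)))
        ((2*(Q t) - 4*(x^2*(2*t-1)^2))/(2*c^2*(Q t)^2)) t := by
      have hd : HasDerivAt (fun t => 2*c^2*(Q t)) (2*c^2*(4*x^2*(2*t-1))) t := hQ'.const_mul _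
      have := hnum.div hd (by positivity)
      refine this.congr_deriv ?_
      field_simp
    have harct : 1+(x*(2*t-1)/c)^2 = Q t / c^2 := by
      rw [hQeq]; field_simp; ring
    have h4 : HasDerivAt (fun t => (3/(8*c^5) - 1/(2*c^3)) * Real.arctan (x*(2*t-1)/c) / x)
        ((3 - 4*c^2)/(4*c^4*(Q t))) t := by
      have hin : HasDerivAt (fun t : ℝ => x*(2*t-1)/c) (x*2/c) t :=
        ((hnum.const_mul x).div_const c)
      have := ((hin.arctan).const_mul (3/(8*c^5) - 1/(2*c^3))).div_const x
      refine this.congr_deriv ?_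
      rw [harct]
      field_simp
      ring
    have htot := ((h1.add h2).sub h3).add h4
    refine htot.congr_deriv ?_
    have hsub : x^2*(2*t-1)^2 = Q t - c^2 := by rw [hQeq]; ring
    rw [hsub]
    field_simp
    ring
  have hcont : Continuous (fun t : ℝ => 2 / (Q t)^3 - 2 / (Q t)^2) := by
    apply Continuous.sub
    · exact continuous_const.div (hQcont.pow 3) (fun t => by have := hQpos t; positivity)
    · exact continuous_const.div (hQcont.pow 2) (fun t => by have := hQpos t; positivity)
  have hFTC := integral_eq_sub_of_hasDerivAt hderiv (hcont.intervalIntegrable 0 1)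
  rw [hFTC]
  have hQ1 : Q 1 = 1 := by simp [hQdef]
  have hQ0 : Q 0 = 1 := by simp [hQdef]
  simp only [hFdef, hQ1, hQ0]
  have e1 : x*(2*(1:ℝ)-1)/c = x/c := by ring_nf
  have e0 : x*(2*(0:ℝ)-1)/c = -(x/c) := by ring_nf
  rw [e1, e0, Real.arctan_neg, hz]
  field_simp
  ring

/-- For `0 < |z| < π/2`,
`∑_{n=0}^∞ 4^n n (sin z)^(2n) / ((2n+1)·C_n)
  = (1/(4 cos⁴ z))·(2 - cos(2z) + (1 - 2cos(2z))·2z/sin(2z))`. -/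
theorem g_trig_one (z : ℝ) (hz0 : 0 < |z|) (hz1 : |z| < Real.pi / 2) :
    ∑' n : ℕ, 4 ^ n * (n : ℝ) * Real.sin z ^ (2 * n) / ((2 * (n : ℝ) + 1) * (catalan n : ℝ))
      = 1 / (4 * Real.cos z ^ 4)
          * (2 - Real.cos (2 * z) + (1 - 2 * Real.cos (2 * z)) * (2 * z) / Real.sin (2 * z)) := by
  obtain ⟨hzl, hzr⟩ := abs_lt.mp hz1
  set x := Real.sin z with hxdef
  set c := Real.cos z with hcdef
  have hc : 0 < c := Real.cos_pos_of_mem_Ioo ⟨hzl, hzr⟩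
  have hxc : x^2 + c^2 = 1 := Real.sin_sq_add_cos_sq z
  have hzne : z ≠ 0 := by
    intro h; rw [h] at hz0; simp at hz0
  have hx : x ≠ 0 := by
    intro h
    have hpi := Real.pi_gt_three
    exact hzne ((Real.sin_eq_zero_iff_of_lt_of_lt (by linarith) (by linarith)).mp h)
  have hzarc : Real.arctan (x / c) = z := by
    rw [hxdef, hcdef, ← Real.tan_eq_sin_div_cos]
    exact Real.arctan_tan hzl hzr
  have hx2 : x^2 < 1 := by nlinarith
  have hx2nn : 0 ≤ x^2 := sq_nonneg x
  -- the summand family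
  set f : ℕ → ℝ → ℝ := fun n t => (n : ℝ) * ((n:ℝ) + 1) * (4*x^2*(t*(1-t)))^n with hfdef
  have hfcont : ∀ n, Continuous (f n) := by intro n; fun_prop
  have hfnonneg : ∀ n, ∀ t ∈ Set.Ioc (0:ℝ) 1, 0 ≤ f n t := by
    intro n t ht
    have h1 : 0 ≤ t := le_of_lt ht.1
    have h2 : t ≤ 1 := ht.2
    have : 0 ≤ 4*x^2*(t*(1-t)) := by
      apply mul_nonneg (by positivity)
      apply mul_nonneg h1 (by linarith)
    positivity
  -- Step A : each integral equals the series term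
  have hcatpos : ∀ n : ℕ, 0 < (catalan n : ℝ) := by
    intro n
    have h : 0 < catalan n := Nat.pos_of_ne_zero (fun h0 => by
      have hcb := succ_mul_catalan_eq_centralBinom n
      rw [h0, mul_zero] at hcb
      exact (Nat.centralBinom_pos n).ne' hcb.symm)
    exact_mod_cast h
  have hA : ∀ n : ℕ, ∫ t in Set.Ioc (0:ℝ) 1, f n t
      = 4 ^ n * (n : ℝ) * x ^ (2 * n) / ((2 * (n : ℝ) + 1) * (catalan n : ℝ)) := by
    intro n
    rw [← intervalIntegral.integral_of_le (by norm_num : (0:ℝ) ≤ 1)]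
    have : ∀ t : ℝ, f n t = ((n : ℝ) * ((n:ℝ) + 1) * (4*x^2)^n) * (t^n * (1-t)^n) := by
      intro t; simp only [hfdef]; rw [mul_pow (4*x^2), mul_pow t]; ring
    simp only [this]
    rw [intervalIntegral.integral_const_mul, beta_nat n n]
    have hfac : (0:ℝ) < ((2*n+1).factorial : ℝ) := by exact_mod_cast (2*n+1).factorial_pos
    have hcp := hcatpos n
    have hden : ((2 * (n:ℝ) + 1) * (catalan n : ℝ)) ≠ 0 := by positivity
    rw [show n + n + 1 = 2*n+1 by ring]
    have hcf := cat_fact n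
    have h4x : ((4:ℝ)*x^2)^n = 4^n * x^(2*n) := by rw [mul_pow, pow_mul]
    rw [h4x]
    field_simp
    linear_combination (n:ℝ) * hcf
  -- Step B : summability of the integrals of norms
  have hB : Summable (fun n => ∫ t in Set.Ioc (0:ℝ) 1, ‖f n t‖) := by
    have heq : ∀ n, ∫ t in Set.Ioc (0:ℝ) 1, ‖f n t‖ = ∫ t in Set.Ioc (0:ℝ) 1, f n t := by
      intro n
      apply setIntegral_congr_fun measurableSet_Ioc
      intro t ht
      exact Real.norm_of_nonneg (hfnonneg n t ht)
    rw [funext heq]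
    simp only [hA]
    have hsum : Summable (fun n : ℕ => (n : ℝ) * ((n:ℝ) + 1) * (x^2) ^ n) :=
      (hasSum_n_np1_geo (by rwa [abs_of_nonneg hx2nn])).summable
    apply Summable.of_nonneg_of_le _ _ hsum
    · intro n
      have hxn : (0:ℝ) ≤ x^(2*n) := by rw [pow_mul]; positivity
      exact div_nonneg (mul_nonneg (mul_nonneg (by positivity) (Nat.cast_nonneg n)) hxn)
        (mul_nonneg (by positivity) (hcatpos n).le)
    · intro n
      have hcp := hcatpos n
      rw [div_le_iff₀ (mul_pos (by positivity) (hcatpos n))]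
      have h4 := four_pow_beta_le n
      have hcf := cat_fact n
      have hxpow : x ^ (2*n) = (x^2)^n := by rw [pow_mul]
      have hfacpos : (0:ℝ) < (n.factorial : ℝ) := by exact_mod_cast n.factorial_pos
      have hx2n : (0:ℝ) ≤ (x^2)^n := by positivity
      -- 4^n * n * x^(2n) ≤ n(n+1)(x²)^n * ((2n+1) catalan n)
      -- since 4^n ≤ (2n+1)!/(n!)² = (2n+1)·catalan n·(n+1)
      have hkey : (4:ℝ)^n ≤ ((2 * (n:ℝ) + 1) * (catalan n : ℝ)) * ((n:ℝ)+1) := by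
        have h2 : (4:ℝ)^n * (n.factorial * n.factorial)
            ≤ ((2 * (n:ℝ) + 1) * (catalan n : ℝ)) * ((n:ℝ)+1) * (n.factorial * n.factorial) := by
          rw [show ((2 * (n:ℝ) + 1) * (catalan n : ℝ)) * ((n:ℝ)+1) * ((n.factorial : ℝ) * n.factorial)
            = ((2 * (n:ℝ) + 1) * (catalan n : ℝ)) * (((n:ℝ)+1) * ((n.factorial : ℝ) * n.factorial)) by ring,
            cat_fact n]
          calc (4:ℝ)^n * (n.factorial * n.factorial) = 4^n * n.factorial * n.factorial := by ring
            _ ≤ _ := four_pow_beta_le n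
        exact (mul_le_mul_iff_of_pos_right (show (0:ℝ) < (n.factorial:ℝ)*(n.factorial:ℝ) by positivity)).mp
          (by linarith [h2])
      rw [hxpow]
      calc (4:ℝ)^n * n * (x^2)^n ≤ (((2 * (n:ℝ) + 1) * (catalan n : ℝ)) * ((n:ℝ)+1)) * n * (x^2)^n := by
            apply mul_le_mul_of_nonneg_right _ hx2n
            apply mul_le_mul_of_nonneg_right hkey (Nat.cast_nonneg n)
        _ = (n : ℝ) * ((n:ℝ) + 1) * (x^2)^n * ((2 * (n:ℝ) + 1) * (catalan n : ℝ)) := by ring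
  -- Step C : interchange
  have hC := MeasureTheory.integral_tsum_of_summable_integral_norm
    (F := f) (μ := volume.restrict (Set.Ioc (0:ℝ) 1))
    (fun n => (hfcont n).integrableOn_Ioc) hB
  -- Step D : pointwise sum
  have hD : ∫ t in Set.Ioc (0:ℝ) 1, (∑' n, f n t)
      = ∫ t in Set.Ioc (0:ℝ) 1, (2 / (1 - 4*x^2*(t*(1-t)))^3 - 2 / (1 - 4*x^2*(t*(1-t)))^2) := by
    apply setIntegral_congr_fun measurableSet_Ioc
    intro t ht
    have h1 : 0 ≤ t := le_of_lt ht.1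
    have h2 : t ≤ 1 := ht.2
    set w := 4*x^2*(t*(1-t)) with hwdef
    have hw0 : 0 ≤ w := by
      apply mul_nonneg (by positivity); apply mul_nonneg h1 (by linarith)
    have hw1 : w < 1 := by nlinarith [sq_nonneg (2*t-1), sq_nonneg x]
    have hws := hasSum_n_np1_geo (w := w) (by rwa [abs_of_nonneg hw0])
    simp only [hfdef]
    rw [hws.tsum_eq]
    have h1w : (1:ℝ) - w ≠ 0 := by linarith
    simp only [← hwdef]
    field_simp
    ring
  -- Step E : assemble
  calc ∑' n : ℕ, 4 ^ n * (n : ℝ) * x ^ (2 * n) / ((2 * (n : ℝ) + 1) * (catalan n : ℝ))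
      = ∑' n : ℕ, ∫ t in Set.Ioc (0:ℝ) 1, f n t := by
        congr 1; funext n; rw [hA n]
    _ = ∫ t in Set.Ioc (0:ℝ) 1, (∑' n, f n t) := hC
    _ = ∫ t in Set.Ioc (0:ℝ) 1, (2 / (1 - 4*x^2*(t*(1-t)))^3 - 2 / (1 - 4*x^2*(t*(1-t)))^2) := hD
    _ = ∫ t in (0:ℝ)..1, (2 / (1 - 4*x^2*(t*(1-t)))^3 - 2 / (1 - 4*x^2*(t*(1-t)))^2) :=
        (intervalIntegral.integral_of_le (by norm_num : (0:ℝ) ≤ 1)).symm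
    _ = (3 - 2*c^2) / (4*c^4) + (3 - 4*c^2) * z / (4*x*c^5) :=
        integral_closed_form hc hxc hx hzarc
    _ = 1 / (4 * c ^ 4) * (2 - Real.cos (2 * z) + (1 - 2 * Real.cos (2 * z)) * (2 * z) / Real.sin (2 * z)) := by
        rw [Real.cos_two_mul, Real.sin_two_mul, ← hxdef, ← hcdef]
        field_simp
        ring
end

section
/- Let r be an even integer and s any integer. Then ∑_{n=1}^∞ 4^n·n·L_{rn+s} / ((2n+1)·L_r^n·C_n) = (L_{3r+s} + (L_r/2)·L_{2r+s})·(L_r/2) + (L_r·F_{2r+s} − 4·F_{3r+s})·(√5·L_r^2/4)·arctan(β^r) + (4·L_{3r+s} − L_r·L_{2r+s} + (4·F_{3r+s} − L_r·F_{2r+s})·√5)·(π·L_r^2/16). -/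
/-- The golden ratio `α = (1+√5)/2`. -/
noncomputable def goldenAlpha : ℝ := (1 + Real.sqrt 5) / 2

/-- `β = (1-√5)/2`. -/
noncomputable def goldenBeta : ℝ := (1 - Real.sqrt 5) / 2

/-- Fibonacci numbers with integer index, via the Binet formula. -/
noncomputable def fibZ (s : ℤ) : ℝ := (goldenAlpha ^ s - goldenBeta ^ s) / Real.sqrt 5

/-- Lucas numbers with integer index, via the Binet formula. -/
noncomputable def lucasZ (s : ℤ) : ℝ := goldenAlpha ^ s + goldenBeta ^ s

/-!
Since `∫₀¹ (t(1-t))ⁿ dt = n!²/(2n+1)! = 1/((2n+1)(n+1)Cₙ)`, the term `4ⁿ n xⁿ/((2n+1)Cₙ)`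
equals `∫₀¹ n(n+1)(4xt(1-t))ⁿ dt`, and summing under the integral gives `∫₀¹ 2u/(1-u)³ dt`
with `u = 4xt(1-t)`. For `x = c²/(1+c²)` this integral is elementary and its value involves
`arctan c`. For even `r` the numbers `A = α^r` and `B = β^r` satisfy `AB = 1`, so
`L_{rn+s}/L_rⁿ = α^s (A/(A+B))ⁿ + β^s (B/(A+B))ⁿ` with `A/(A+B) = A²/(1+A²)`; the two
resulting arctangents are related by `arctan A + arctan B = π/2`.
-/

open Nat Real intervalIntegral

theorem integral_pow_mul_one_sub_pow_succ (m k : ℕ) :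
    (m + 1 : ℝ) * ∫ t in (0 : ℝ)..1, t ^ m * (1 - t) ^ (k + 1)
      = (k + 1) * ∫ t in (0 : ℝ)..1, t ^ (m + 1) * (1 - t) ^ k := by
  have hderiv : ∀ t ∈ Set.uIcc (0 : ℝ) 1,
      HasDerivAt (fun t : ℝ => t ^ (m + 1) * (1 - t) ^ (k + 1))
        ((m + 1) * (t ^ m * (1 - t) ^ (k + 1)) - (k + 1) * (t ^ (m + 1) * (1 - t) ^ k)) t := by
    intro t _
    refine ((hasDerivAt_pow (m + 1) t).fun_mul
      (((hasDerivAt_id' t).const_sub 1).fun_pow (k + 1))).congr_deriv ?_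
    push_cast [Nat.add_sub_cancel]
    ring
  have hint (p q : ℕ) :
      IntervalIntegrable (fun t : ℝ => t ^ p * (1 - t) ^ q) MeasureTheory.volume 0 1 :=
    (by fun_prop : Continuous _).intervalIntegrable 0 1
  -- `t ^ (m + 1) * (1 - t) ^ (k + 1)` vanishes at both endpoints
  have hboundary := integral_eq_sub_of_hasDerivAt hderiv
    (((hint _ _).const_mul _).sub ((hint _ _).const_mul _))
  rw [integral_sub ((hint _ _).const_mul _) ((hint _ _).const_mul _), integral_const_mul,
    integral_const_mul] at hboundary
  norm_num at hboundary
  linarith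

theorem integral_pow_mul_one_sub_pow (m k : ℕ) :
    ∫ t in (0 : ℝ)..1, t ^ m * (1 - t) ^ k = (m ! * k ! : ℝ) / (m + k + 1)! := by
  induction k generalizing m with
  | zero =>
    norm_num [integral_pow, Nat.factorial_succ]
    field_simp
  | succ k ih =>
    have h := integral_pow_mul_one_sub_pow_succ m k
    rw [ih, show m + 1 + k + 1 = m + (k + 1) + 1 by omega] at h
    rw [← mul_right_inj' (by positivity : (m + 1 : ℝ) ≠ 0), h]
    push_cast [Nat.factorial_succ]
    field_simp

theorem factorial_two_mul_add_one_eq_mul_catalan (m : ℕ) :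
    (2 * m + 1)! = (2 * m + 1) * ((m + 1) * catalan m) * (m ! * m !) := by
  have h := Nat.choose_mul_factorial_mul_factorial (by omega : m ≤ 2 * m)
  rw [show 2 * m - m = m by omega] at h
  rw [succ_mul_catalan_eq_centralBinom, Nat.centralBinom, Nat.factorial_succ, ← h]
  ring

theorem catalan_pos (n : ℕ) : 0 < catalan n :=
  Nat.pos_of_mul_pos_left (succ_mul_catalan_eq_centralBinom n ▸ n.centralBinom_pos)

theorem four_pow_div_catalan_eq_integral (m : ℕ) :
    (4 : ℝ) ^ m / ((2 * m + 1) * catalan m)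
      = (m + 1) * ∫ t in (0 : ℝ)..1, (4 * t * (1 - t)) ^ m := by
  have : (catalan m : ℝ) ≠ 0 := by exact_mod_cast (catalan_pos m).ne'
  have hfact : ((2 * m + 1)! : ℝ) = (2 * m + 1) * ((m + 1) * catalan m) * (m ! * m !) := by
    exact_mod_cast factorial_two_mul_add_one_eq_mul_catalan m
  simp_rw [mul_assoc, mul_pow]
  rw [integral_const_mul, integral_pow_mul_one_sub_pow, show m + m + 1 = 2 * m + 1 by ring, hfact]
  field_simp

theorem four_pow_mul_div_catalan_eq_integral (x : ℝ) (n : ℕ) :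
    4 ^ n * n * x ^ n / ((2 * n + 1) * catalan n)
      = ∫ t in (0 : ℝ)..1, n * (n + 1) * (4 * x * t * (1 - t)) ^ n := by
  calc 4 ^ n * n * x ^ n / ((2 * n + 1) * catalan n)
      = n * x ^ n * (4 ^ n / ((2 * n + 1) * catalan n)) := by ring
    _ = ∫ t in (0 : ℝ)..1, n * (n + 1) * (4 * x * t * (1 - t)) ^ n := by
      rw [four_pow_div_catalan_eq_integral, ← mul_assoc, ← integral_const_mul]
      congr 1 with t
      simp only [mul_pow]
      ring

theorem hasSum_mul_succ_mul_geometric {𝕜 : Type*} [NormedField 𝕜] [HasSummableGeomSeries 𝕜]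
    {u : 𝕜} (hu : ‖u‖ < 1) :
    HasSum (fun n : ℕ => n * (n + 1) * u ^ n) (2 * u / (1 - u) ^ 3) := by
  have hterm (n : ℕ) :
      2 * u * ((n + 2).choose 2 * u ^ n) = (n + 1 : ℕ) * ((n + 1 : ℕ) + 1) * u ^ (n + 1) := by
    have hchoose : (n + 2).choose 2 * 2 = (n + 2) * (n + 1) := by
      simpa using (Nat.add_one_mul_choose_eq (n + 1) 1).symm
    have h := congrArg (Nat.cast : ℕ → 𝕜) hchoose
    push_cast at h ⊢
    linear_combination u ^ (n + 1) * h
  rw [← hasSum_nat_add_iff' 1, Finset.sum_range_one]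
  simpa [hterm, div_eq_mul_inv] using
    (hasSum_choose_mul_geometric_of_norm_lt_one 2 hu).mul_left (2 * u)

/-- `∑ n(n+1)uⁿ` at `u = 4xt(1-t)`. -/
noncomputable def catalanKernel (x t : ℝ) : ℝ :=
  2 * (4 * x * t * (1 - t)) / (1 - 4 * x * t * (1 - t)) ^ 3

theorem hasSum_four_pow_mul_div_catalan {x : ℝ} (hx0 : 0 ≤ x) (hx1 : x < 1) :
    HasSum (fun n : ℕ => 4 ^ n * n * x ^ n / ((2 * n + 1) * catalan n))
      (∫ t in (0 : ℝ)..1, catalanKernel x t) := by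
  have hu {t : ℝ} (ht : t ∈ Set.uIoc 0 1) :
      0 ≤ 4 * x * t * (1 - t) ∧ 4 * x * t * (1 - t) ≤ x := by
    rw [Set.uIoc_of_le zero_le_one] at ht
    have : 0 ≤ 1 - t := by linarith [ht.2]
    exact ⟨by have := ht.1.le; positivity, by nlinarith [sq_nonneg (2 * t - 1)]⟩
  simp_rw [four_pow_mul_div_catalan_eq_integral]
  refine hasSum_integral_of_dominated_convergence (fun n _ => n * (n + 1) * x ^ n)
    (fun n => (by fun_prop : Continuous _).aestronglyMeasurable) (fun n => ?_)
    (.of_forall fun _ _ =>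
      (hasSum_mul_succ_mul_geometric (by rwa [Real.norm_of_nonneg hx0])).summable)
    intervalIntegrable_const
    (.of_forall fun t ht => hasSum_mul_succ_mul_geometric
      (by rw [Real.norm_of_nonneg (hu ht).1]; linarith [(hu ht).2]))
  refine .of_forall fun t ht => ?_
  rw [Real.norm_of_nonneg (by have := (hu ht).1; positivity)]
  gcongr
  exacts [(hu ht).1, (hu ht).2]

theorem one_sub_four_mul_sq_div_mul_one_sub (c t : ℝ) :
    1 - 4 * (c ^ 2 / (1 + c ^ 2)) * t * (1 - t) = (1 + c ^ 2 * (2 * t - 1) ^ 2) / (1 + c ^ 2) := by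
  field_simp
  ring

theorem hasDerivAt_catalanKernel_primitive {c : ℝ} (hc : c ≠ 0) (t : ℝ) :
    HasDerivAt (fun t => (1 + c ^ 2) ^ 2 / 8 *
        (2 * (1 + c ^ 2) * (2 * t - 1) / (1 + c ^ 2 * (2 * t - 1) ^ 2) ^ 2
          + (3 * c ^ 2 - 1) * (2 * t - 1) / (1 + c ^ 2 * (2 * t - 1) ^ 2)
          + (3 * c ^ 2 - 1) / c * arctan (c * (2 * t - 1))))
      (catalanKernel (c ^ 2 / (1 + c ^ 2)) t) t := by
  have hw : HasDerivAt (fun t : ℝ => 2 * t - 1) 2 t := by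
    simpa using ((hasDerivAt_id' t).const_mul 2).sub_const 1
  have hD : HasDerivAt (fun t : ℝ => 1 + c ^ 2 * (2 * t - 1) ^ 2)
      (c ^ 2 * (2 * (2 * t - 1) * 2)) t := by
    simpa using ((hw.fun_pow 2).const_mul (c ^ 2)).const_add 1
  have hD0 : 1 + c ^ 2 * (2 * t - 1) ^ 2 ≠ 0 := by positivity
  have harctan := (hasDerivAt_arctan' _).comp t (hw.const_mul c)
  refine ((((hw.const_mul _).div (hD.fun_pow 2) (pow_ne_zero 2 hD0)).add
    ((hw.const_mul _).div hD hD0)).add (harctan.const_mul _)).const_mul _ |>.congr_deriv ?_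
  rw [catalanKernel, one_sub_four_mul_sq_div_mul_one_sub]
  field_simp
  ring

theorem integral_catalanKernel {c : ℝ} (hc : c ≠ 0) :
    ∫ t in (0 : ℝ)..1, catalanKernel (c ^ 2 / (1 + c ^ 2)) t
      = (1 + c ^ 2) * (1 + 3 * c ^ 2) / 4
        + (3 * c ^ 2 - 1) * (1 + c ^ 2) ^ 2 * arctan c / (4 * c) := by
  have hcont : Continuous (catalanKernel (c ^ 2 / (1 + c ^ 2))) := by
    refine .div (by fun_prop) (by fun_prop) fun t => pow_ne_zero 3 ?_
    rw [one_sub_four_mul_sq_div_mul_one_sub]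
    positivity
  rw [integral_eq_sub_of_hasDerivAt (fun t _ => hasDerivAt_catalanKernel_primitive hc t)
    (hcont.intervalIntegrable 0 1)]
  norm_num [arctan_neg]
  field_simp
  ring

theorem hasSum_four_pow_mul_div_catalan_succ {c : ℝ} (hc : c ≠ 0) :
    HasSum (fun n : ℕ => 4 ^ (n + 1) * ((n : ℝ) + 1) * (c ^ 2 / (1 + c ^ 2)) ^ (n + 1)
        / ((2 * ((n : ℝ) + 1) + 1) * catalan (n + 1)))
      ((1 + c ^ 2) * (1 + 3 * c ^ 2) / 4
        + (3 * c ^ 2 - 1) * (1 + c ^ 2) ^ 2 * arctan c / (4 * c)) := by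
  have h := integral_catalanKernel hc ▸ hasSum_four_pow_mul_div_catalan (by positivity)
    ((div_lt_one (by positivity)).mpr (by linarith))
  rw [← hasSum_nat_add_iff' 1] at h
  simpa using h

theorem goldenAlpha_pos : 0 < goldenAlpha := goldenRatio_pos

theorem goldenBeta_ne_zero : goldenBeta ≠ 0 := goldenConj_ne_zero

theorem goldenAlpha_zpow_mul_goldenBeta_zpow {r : ℤ} (hr : Even r) :
    goldenAlpha ^ r * goldenBeta ^ r = 1 := by
  rw [← mul_zpow, show goldenAlpha * goldenBeta = -1 from goldenRatio_mul_goldenConj,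
    hr.neg_one_zpow]

theorem zpow_natCast_mul_add {G : Type*} [GroupWithZero G] {a : G} (ha : a ≠ 0)
    (k : ℕ) (r s : ℤ) :
    a ^ (k * r + s) = (a ^ r) ^ k * a ^ s := by
  rw [zpow_add₀ ha, mul_comm, zpow_mul, zpow_natCast]

theorem lucasZ_natCast_mul_add (k : ℕ) (r s : ℤ) :
    lucasZ (k * r + s)
      = (goldenAlpha ^ r) ^ k * goldenAlpha ^ s + (goldenBeta ^ r) ^ k * goldenBeta ^ s := by
  rw [lucasZ, zpow_natCast_mul_add goldenAlpha_pos.ne', zpow_natCast_mul_add goldenBeta_ne_zero]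

theorem fibZ_natCast_mul_add (k : ℕ) (r s : ℤ) :
    fibZ (k * r + s)
      = ((goldenAlpha ^ r) ^ k * goldenAlpha ^ s - (goldenBeta ^ r) ^ k * goldenBeta ^ s)
          / √5 := by
  rw [fibZ, zpow_natCast_mul_add goldenAlpha_pos.ne', zpow_natCast_mul_add goldenBeta_ne_zero]

theorem lucasZ_mul_add_div_lucasZ_pow {r : ℤ} (hr : Even r) (s : ℤ) (k : ℕ) :
    lucasZ (r * k + s) / lucasZ r ^ k
      = goldenAlpha ^ s * ((goldenAlpha ^ r) ^ 2 / (1 + (goldenAlpha ^ r) ^ 2)) ^ k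
        + goldenBeta ^ s * ((goldenBeta ^ r) ^ 2 / (1 + (goldenBeta ^ r) ^ 2)) ^ k := by
  rw [mul_comm r, lucasZ_natCast_mul_add, lucasZ]
  have hAB := goldenAlpha_zpow_mul_goldenBeta_zpow hr
  have hA : 0 < goldenAlpha ^ r := zpow_pos goldenAlpha_pos r
  generalize goldenAlpha ^ r = A at *
  generalize goldenBeta ^ r = B at *
  obtain rfl : B = A⁻¹ := eq_inv_of_mul_eq_one_right hAB
  rw [show A ^ 2 / (1 + A ^ 2) = A / (A + A⁻¹) by field_simp; ring,
    show A⁻¹ ^ 2 / (1 + A⁻¹ ^ 2) = A⁻¹ / (A + A⁻¹) by field_simp, div_pow, div_pow]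
  field_simp

theorem hasSum_four_pow_mul_lucasZ_div_catalan {r : ℤ} (hr : Even r) (s : ℤ) :
    HasSum (fun n : ℕ => 4 ^ (n + 1) * ((n : ℝ) + 1) * lucasZ (r * ((n : ℤ) + 1) + s)
        / ((2 * ((n : ℝ) + 1) + 1) * lucasZ r ^ (n + 1) * (catalan (n + 1) : ℝ)))
      (goldenAlpha ^ s * ((1 + (goldenAlpha ^ r) ^ 2) * (1 + 3 * (goldenAlpha ^ r) ^ 2) / 4
          + (3 * (goldenAlpha ^ r) ^ 2 - 1) * (1 + (goldenAlpha ^ r) ^ 2) ^ 2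
            * arctan (goldenAlpha ^ r) / (4 * goldenAlpha ^ r))
        + goldenBeta ^ s * ((1 + (goldenBeta ^ r) ^ 2) * (1 + 3 * (goldenBeta ^ r) ^ 2) / 4
          + (3 * (goldenBeta ^ r) ^ 2 - 1) * (1 + (goldenBeta ^ r) ^ 2) ^ 2
            * arctan (goldenBeta ^ r) / (4 * goldenBeta ^ r))) := by
  have hA : goldenAlpha ^ r ≠ 0 := zpow_ne_zero r goldenAlpha_pos.ne'
  have hB : goldenBeta ^ r ≠ 0 := zpow_ne_zero r goldenBeta_ne_zero
  have hL : lucasZ r ≠ 0 := by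
    rw [lucasZ, eq_inv_of_mul_eq_one_right (goldenAlpha_zpow_mul_goldenBeta_zpow hr)]
    have := zpow_pos goldenAlpha_pos r
    positivity
  refine (((hasSum_four_pow_mul_div_catalan_succ hA).mul_left (goldenAlpha ^ s)).add
    ((hasSum_four_pow_mul_div_catalan_succ hB).mul_left (goldenBeta ^ s))).congr_fun fun n => ?_
  have h := lucasZ_mul_add_div_lucasZ_pow hr s (n + 1)
  push_cast at h
  rw [div_eq_iff (pow_ne_zero _ hL)] at h
  rw [h]
  field_simp

/-- Theorem 3 of the paper (Lucas part): for `r` even and any integer `s`,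
`∑_{n=1}^∞ 4^n·n·L_{rn+s}/((2n+1)·L_r^n·C_n)` has the stated closed form. -/
theorem lucas_even_r_catalan_sum (r s : ℤ) (hr : Even r) :
    ∑' n : ℕ, 4 ^ (n + 1) * ((n : ℝ) + 1) * lucasZ (r * ((n : ℤ) + 1) + s)
        / ((2 * ((n : ℝ) + 1) + 1) * lucasZ r ^ (n + 1) * (catalan (n + 1) : ℝ))
      = (lucasZ (3 * r + s) + lucasZ r / 2 * lucasZ (2 * r + s)) * (lucasZ r / 2)
        + (lucasZ r * fibZ (2 * r + s) - 4 * fibZ (3 * r + s))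
            * (Real.sqrt 5 * lucasZ r ^ 2 / 4) * Real.arctan (goldenBeta ^ r)
        + (4 * lucasZ (3 * r + s) - lucasZ r * lucasZ (2 * r + s)
            + (4 * fibZ (3 * r + s) - lucasZ r * fibZ (2 * r + s)) * Real.sqrt 5)
            * (Real.pi * lucasZ r ^ 2 / 16) := by
  have hA : 0 < goldenAlpha ^ r := zpow_pos goldenAlpha_pos r
  have h2L := lucasZ_natCast_mul_add 2 r s
  have h3L := lucasZ_natCast_mul_add 3 r s
  have h2F := fibZ_natCast_mul_add 2 r s
  have h3F := fibZ_natCast_mul_add 3 r s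
  push_cast at h2L h3L h2F h3F
  rw [(hasSum_four_pow_mul_lucasZ_div_catalan hr s).tsum_eq, h2L, h3L, h2F, h3F, lucasZ,
    eq_inv_of_mul_eq_one_right (goldenAlpha_zpow_mul_goldenBeta_zpow hr), arctan_inv_of_pos hA]
  field_simp
  ring
end
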